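/- arXiv:q-alg/9505026 — 7 statements merged into one kernel-verified Lean document; each statement's English description precedes it below -/
import Mathlib

section
/- In a finite-dimensional commutative algebra A over a field, for every nonzero element x there exists y in A such that xy is a nonzero element of the socle (the set of elements annihilated by all nilpotent elements of A). -/
/-!
Let `N` be the nilradical; it is nilpotent since `A` is Artinian. Take `k` maximal with
`x * N ^ k ≠ 0` and pick `y ∈ N ^ k` with `x * y ≠ 0`. For nilpotent `a` we have
`a * y ∈ N ^ (k + 1)`, so `a * (x * y) = x * (a * y) = 0`.
-/

theorem Ideal.exists_mul_ne_zero_forall_mul_eq_zero_of_isNilpotent {R : Type*} [CommRing R]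
    {I : Ideal R} (hI : IsNilpotent I) {x : R} (hx : x ≠ 0) :
    ∃ y : R, x * y ≠ 0 ∧ ∀ a ∈ I, a * (x * y) = 0 := by
  classical
  let Kills : ℕ → Prop := fun n => ∀ y ∈ I ^ n, x * y = 0
  have hKills : ∃ n, Kills n := by
    obtain ⟨m, hm⟩ := hI
    exact ⟨m, fun y hy => by rw [hm, Ideal.zero_eq_bot, Ideal.mem_bot] at hy; simp [hy]⟩
  obtain ⟨k, hk⟩ : ∃ k, Nat.find hKills = k + 1 :=
    Nat.exists_eq_succ_of_ne_zero fun h0 => hx <| by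
      simpa using (h0 ▸ Nat.find_spec hKills : Kills 0) 1 (by simp)
  have hkills_succ : Kills (k + 1) := hk ▸ Nat.find_spec hKills
  obtain ⟨y, hy, hxy⟩ : ∃ y ∈ I ^ k, x * y ≠ 0 := by
    simpa [Kills] using Nat.find_min hKills (hk ▸ k.lt_succ_self)
  refine ⟨y, hxy, fun a ha => ?_⟩
  calc a * (x * y) = x * (a * y) := mul_left_comm a x y
    _ = 0 := hkills_succ _ (pow_succ' I k ▸ Ideal.mul_mem_mul ha hy)

/-- In a finite-dimensional commutative algebra over a field, every nonzero `x`
admits `y` such that `x * y` is a nonzero element of the socle (the annihilator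
of the nilpotent elements). -/
theorem stmt0 {F A : Type*} [Field F] [CommRing A] [Algebra F A]
    [FiniteDimensional F A] (x : A) (hx : x ≠ 0) :
    ∃ y : A, x * y ≠ 0 ∧ ∀ a : A, IsNilpotent a → a * (x * y) = 0 := by
  have : IsArtinianRing A := IsArtinianRing.of_finite F A
  obtain ⟨y, hxy, hy⟩ := Ideal.exists_mul_ne_zero_forall_mul_eq_zero_of_isNilpotent
    IsArtinianRing.isNilpotent_nilradical hx
  exact ⟨y, hxy, fun a ha => hy a (mem_nilradical.mpr ha)⟩
end

section
/- Every indecomposable commutative Frobenius algebra over an algebraically closed field is either one-dimensional, or is a local algebra with nonzero nilpotents whose socle is one-dimensional. -/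
/-!
Write the minimal polynomial of `a ∈ A` as `(X - c)^k * q` with `q(c) ≠ 0`. The coprime elements
`(a - c)^k` and `q(a)` multiply to zero, so they generate complementary ideals, and indecomposability
forces `(a - c)^k = 0` (`q(a) = 0` is impossible by minimality). Hence `A = F ⊕ N` with `N` the
nilradical. The form `(x, y) ↦ μ (x * y)` is nondegenerate and the orthogonal of an ideal is its
annihilator, so the socle, the annihilator of `N`, has dimension `dim A - dim N = 1`.
-/

open Polynomial Module

def IsIndecomposable (R : Type*) [CommRing R] : Prop :=
  ¬ ∃ A₁ A₂ : Ideal R, A₁ ≠ ⊥ ∧ A₂ ≠ ⊥ ∧ A₁ ⊔ A₂ = ⊤ ∧ A₁ ⊓ A₂ = ⊥ ∧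
    ∀ x ∈ A₁, ∀ y ∈ A₂, x * y = 0

theorem IsIndecomposable.eq_zero_or_eq_zero_of_isCoprime {R : Type*} [CommRing R]
    (hR : IsIndecomposable R) {x y : R} (hco : IsCoprime x y) (hxy : x * y = 0) :
    x = 0 ∨ y = 0 := by
  have hmul : Ideal.span {x} * Ideal.span {y} = ⊥ := by
    rw [Ideal.span_singleton_mul_span_singleton, hxy, Ideal.span_singleton_eq_bot]
  have hco' := (Ideal.isCoprime_span_singleton_iff x y).mpr hco
  by_contra! h
  refine hR ⟨_, _, by simpa using h.1, by simpa using h.2, hco'.sup_eq,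
    by rw [← Ideal.mul_eq_inf_of_isCoprime hco', hmul], fun a ha b hb => ?_⟩
  simpa [hmul] using Ideal.mul_mem_mul ha hb

theorem IsIndecomposable.exists_isNilpotent_sub_algebraMap {F A : Type*} [Field F]
    [IsAlgClosed F] [CommRing A] [Algebra F A] [FiniteDimensional F A] [Nontrivial A]
    (hA : IsIndecomposable A) (a : A) : ∃ c : F, IsNilpotent (a - algebraMap F A c) := by
  have ha : IsIntegral F a := Algebra.IsIntegral.isIntegral a
  obtain ⟨c, hc⟩ := IsAlgClosed.exists_root (minpoly F a) (minpoly.degree_pos ha).ne'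
  obtain ⟨q, hpq, hq⟩ :=
    exists_eq_pow_rootMultiplicity_mul_and_not_dvd _ (minpoly.ne_zero ha) c
  set k := (minpoly F a).rootMultiplicity c
  have hco : IsCoprime (aeval a ((X - C c) ^ k)) (aeval a q) :=
    (((irreducible_X_sub_C c).coprime_iff_not_dvd.mpr hq).pow_left).map (aeval a).toRingHom
  have hprod : aeval a ((X - C c) ^ k) * aeval a q = 0 := by
    rw [← map_mul, ← hpq, minpoly.aeval]
  rcases hA.eq_zero_or_eq_zero_of_isCoprime hco hprod with hf | hq0
  · exact ⟨c, k, by simpa using hf⟩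
  · have hk : 0 < k := (rootMultiplicity_pos (minpoly.ne_zero ha)).mpr hc
    have hq_ne : q ≠ 0 := by rintro rfl; exact minpoly.ne_zero ha (by simpa using hpq)
    have hdeg := natDegree_le_of_dvd (minpoly.dvd F a hq0) hq_ne
    rw [hpq, natDegree_mul (pow_ne_zero _ (X_sub_C_ne_zero c)) hq_ne, natDegree_pow,
      natDegree_X_sub_C] at hdeg
    omega

theorem finrank_nilradical_add_one {F A : Type*} [Field F] [CommRing A] [Algebra F A]
    [FiniteDimensional F A] [Nontrivial A]
    (h : ∀ a : A, ∃ c : F, IsNilpotent (a - algebraMap F A c)) :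
    finrank F ((nilradical A).restrictScalars F) + 1 = finrank F A := by
  have hcompl : IsCompl ((nilradical A).restrictScalars F) (Submodule.span F {1}) := by
    refine ⟨Submodule.disjoint_def.mpr fun x hx h1 => ?_, codisjoint_iff.mpr (eq_top_iff.mpr fun a _ => ?_)⟩
    · obtain ⟨c, rfl⟩ := Submodule.mem_span_singleton.mp h1
      rw [← Algebra.algebraMap_eq_smul_one] at hx ⊢
      have : IsNilpotent c := (IsNilpotent.map_iff (FaithfulSMul.algebraMap_injective F A)).mp hx
      simp [isNilpotent_iff_eq_zero.mp this]
    · obtain ⟨c, hc⟩ := h a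
      rw [← sub_add_cancel a (algebraMap F A c)]
      refine Submodule.add_mem_sup hc ?_
      rw [Algebra.algebraMap_eq_smul_one]
      exact Submodule.smul_mem _ _ (Submodule.mem_span_singleton_self 1)
  rw [← Submodule.finrank_add_eq_of_isCompl hcompl, finrank_span_singleton one_ne_zero]

section Frobenius

variable {F A : Type*} [Field F] [CommRing A] [Algebra F A] (μ : A →ₗ[F] F)

def frobeniusForm : LinearMap.BilinForm F A := (LinearMap.mul F A).compr₂ μ

@[simp]
theorem frobeniusForm_apply (x y : A) : frobeniusForm μ x y = μ (x * y) := rfl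

variable {μ}

theorem frobeniusForm_nondegenerate (hnd : ∀ x : A, x ≠ 0 → ∃ y : A, μ (x * y) ≠ 0) :
    (frobeniusForm μ).Nondegenerate := by
  refine ⟨fun x hx => ?_, fun y hy => ?_⟩
  · by_contra h
    obtain ⟨y, hy⟩ := hnd x h
    exact hy (hx y)
  · by_contra h
    obtain ⟨x, hx⟩ := hnd y h
    exact hx (by simpa [mul_comm] using hy x)

theorem frobeniusForm_orthogonal_eq_annihilator
    (hnd : ∀ x : A, x ≠ 0 → ∃ y : A, μ (x * y) ≠ 0) (I : Ideal A) :
    (frobeniusForm μ).orthogonal (I.restrictScalars F) = I.annihilator.restrictScalars F := by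
  ext t
  simp only [LinearMap.BilinForm.mem_orthogonal_iff, Submodule.restrictScalars_mem,
    Submodule.mem_annihilator, smul_eq_mul, frobeniusForm_apply]
  refine ⟨fun ht n hn => ?_, fun ht n hn => by rw [mul_comm, ht n hn, map_zero]⟩
  by_contra h
  obtain ⟨y, hy⟩ := hnd _ h
  exact hy (by simpa [mul_comm, mul_left_comm] using ht (n * y) (I.mul_mem_right y hn))

theorem finrank_annihilator_add_finrank [FiniteDimensional F A]
    (hnd : ∀ x : A, x ≠ 0 → ∃ y : A, μ (x * y) ≠ 0) (I : Ideal A) :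
    finrank F (I.annihilator.restrictScalars F) + finrank F (I.restrictScalars F) =
      finrank F A := by
  rw [← frobeniusForm_orthogonal_eq_annihilator hnd,
    LinearMap.BilinForm.finrank_orthogonal (frobeniusForm_nondegenerate hnd)]
  have := Submodule.finrank_le (I.restrictScalars F)
  omega

end Frobenius

theorem mem_annihilator_nilradical_iff {R : Type*} [CommRing R] {t : R} :
    t ∈ (nilradical R).annihilator ↔ ∀ a : R, IsNilpotent a → a * t = 0 := by
  simp [Submodule.mem_annihilator, mem_nilradical, mul_comm]

/-- Every indecomposable commutative Frobenius algebra over an algebraically closed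
field is either one-dimensional, or a local algebra (spanned by `1` and nilpotents)
with a nonzero nilpotent and a one-dimensional socle. -/
theorem stmt3 {F A : Type*} [Field F] [IsAlgClosed F] [CommRing A] [Algebra F A]
    [FiniteDimensional F A] [Nontrivial A]
    (μ : A →ₗ[F] F) (hnd : ∀ x : A, x ≠ 0 → ∃ y : A, μ (x * y) ≠ 0)
    (hindec : ¬ ∃ A₁ A₂ : Ideal A, A₁ ≠ ⊥ ∧ A₂ ≠ ⊥ ∧ A₁ ⊔ A₂ = ⊤ ∧ A₁ ⊓ A₂ = ⊥ ∧
      ∀ x ∈ A₁, ∀ y ∈ A₂, x * y = 0) :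
    Module.finrank F A = 1 ∨
    ((∃ n : A, n ≠ 0 ∧ IsNilpotent n) ∧
     (∀ a : A, ∃ (c : F) (n : A), IsNilpotent n ∧ a = algebraMap F A c + n) ∧
     (∃ s : A, s ≠ 0 ∧ (∀ a : A, IsNilpotent a → a * s = 0) ∧
       ∀ t : A, (∀ a : A, IsNilpotent a → a * t = 0) → ∃ c : F, t = c • s)) := by
  have hlocal := IsIndecomposable.exists_isNilpotent_sub_algebraMap (F := F) hindec
  have hnil := finrank_nilradical_add_one hlocal
  have hsoc := finrank_annihilator_add_finrank hnd (nilradical A)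
  rcases eq_or_ne (finrank F A) 1 with h1 | h1
  · exact Or.inl h1
  refine Or.inr ⟨?_, fun a => ?_, ?_⟩
  · have hne : (nilradical A).restrictScalars F ≠ ⊥ := by
      intro h
      rw [h, finrank_bot] at hnil
      omega
    obtain ⟨n, hn, hn0⟩ := Submodule.exists_mem_ne_zero_of_ne_bot hne
    exact ⟨n, hn0, hn⟩
  · obtain ⟨c, hc⟩ := hlocal a
    exact ⟨c, _, hc, (add_sub_cancel _ _).symm⟩
  · obtain ⟨⟨s, hs⟩, hs0, hspan⟩ := finrank_eq_one_iff'.mp (show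
      finrank F ((nilradical A).annihilator.restrictScalars F) = 1 by omega)
    refine ⟨s, fun h => hs0 (Subtype.ext h), mem_annihilator_nilradical_iff.mp hs,
      fun t ht => ?_⟩
    obtain ⟨c, hc⟩ := hspan ⟨t, mem_annihilator_nilradical_iff.mpr ht⟩
    exact ⟨c, congrArg Subtype.val hc.symm⟩
end

section
/- In a commutative Frobenius algebra (A, μ) with nonzero nilradical, the socle (annihilator of the nilradical) is nonzero, and if A is indecomposable then the socle is one-dimensional. -/
/-!
A finite-dimensional algebra is Artinian, so its nilradical `N` is nilpotent and the last
nonzero power of `N` is killed by `N`. If `A` is indecomposable it has no idempotents other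
than `0` and `1`; as `Spec A` is finite and discrete, every point is clopen and hence cut out
by an idempotent, so `A` is local with maximal ideal `N`, and `A / N = F` because `F` is
algebraically closed. The Frobenius form `x ↦ μ (x * ·)` identifies `A` with its dual and
`Ann I` with the annihilator of `I` in the dual, so `dim Ann I = dim A - dim I`; for `I = N`
this is `dim A / N = 1`.
-/

open Module

namespace Ideal

variable {R : Type*} [CommRing R]

theorem exists_ne_zero_forall_mul_eq_zero_of_isNilpotent [Nontrivial R] {I : Ideal R}
    (hI : IsNilpotent I) : ∃ s : R, s ≠ 0 ∧ ∀ a ∈ I, a * s = 0 := by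
  classical
  have hk : 0 < Nat.find hI := by
    by_contra! h
    have := Nat.find_spec hI
    rw [Nat.le_zero.mp h, pow_zero, one_eq_top, zero_eq_bot] at this
    exact top_ne_bot this
  obtain ⟨s, hsI, hs0⟩ :=
    Submodule.exists_mem_ne_zero_of_ne_bot (Nat.find_min hI (Nat.sub_one_lt hk.ne'))
  refine ⟨s, hs0, fun a ha => ?_⟩
  have := mul_mem_mul ha hsI
  rwa [← pow_succ', Nat.sub_add_cancel hk, Nat.find_spec hI, zero_eq_bot, mem_bot] at this

theorem exists_ideal_decomposition_of_isIdempotentElem {e : R} (he : IsIdempotentElem e)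
    (h0 : e ≠ 0) (h1 : e ≠ 1) :
    ∃ I J : Ideal R, I ≠ ⊥ ∧ J ≠ ⊥ ∧ I ⊔ J = ⊤ ∧ I ⊓ J = ⊥ ∧ ∀ x ∈ I, ∀ y ∈ J, x * y = 0 := by
  have horth : ∀ x ∈ span {e}, ∀ y ∈ span {1 - e}, x * y = 0 := by
    intro x hx y hy
    obtain ⟨a, rfl⟩ := mem_span_singleton'.mp hx
    obtain ⟨b, rfl⟩ := mem_span_singleton'.mp hy
    calc a * e * (b * (1 - e)) = a * b * (e * (1 - e)) := by ring
      _ = 0 := by rw [he.mul_one_sub_self, mul_zero]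
  refine ⟨span {e}, span {1 - e}, by simpa using h0, by simpa [sub_eq_zero] using h1.symm,
    ?_, ?_, horth⟩
  · refine (eq_top_iff_one _).mpr ?_
    simpa using Submodule.add_mem_sup (mem_span_singleton_self e) (mem_span_singleton_self (1 - e))
  · refine eq_bot_iff.mpr fun x hx => ?_
    have hxe : x = x * e := by
      obtain ⟨a, rfl⟩ := mem_span_singleton'.mp hx.1
      rw [mul_assoc, he.eq]
    rw [mem_bot, hxe, mul_comm, horth e (mem_span_singleton_self e) x hx.2]

end Ideal

theorem IsArtinianRing.isLocalRing_of_isIdempotentElem {R : Type*} [CommRing R]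
    [IsArtinianRing R] [Nontrivial R] (h : ∀ e : R, IsIdempotentElem e → e = 0 ∨ e = 1) :
    IsLocalRing R := by
  have : Subsingleton (PrimeSpectrum R) := by
    refine ⟨fun p q => ?_⟩
    obtain ⟨e, he, hpe⟩ := PrimeSpectrum.isClopen_iff.mp (isClopen_discrete {p})
    rcases h e he with rfl | rfl
    · simp [PrimeSpectrum.basicOpen_zero] at hpe
    · have hq : q ∈ ({p} : Set (PrimeSpectrum R)) := by simp [hpe, PrimeSpectrum.basicOpen_one]
      exact (Set.mem_singleton_iff.mp hq).symm
  have : Subsingleton (MaximalSpectrum R) := MaximalSpectrum.toPrimeSpectrum_injective.subsingleton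
  exact .of_singleton_maximalSpectrum

namespace Ideal

variable {F A : Type*} [Field F] [CommRing A] [Algebra F A]

theorem finrank_quotient_eq_one_of_isAlgClosed [IsAlgClosed F] [FiniteDimensional F A]
    (m : Ideal A) [m.IsMaximal] : finrank F (A ⧸ m) = 1 := by
  have : Algebra.IsIntegral F (A ⧸ m) := Algebra.IsIntegral.of_finite F _
  refine (finrank_eq_one_iff_of_nonzero' 1 one_ne_zero).mpr fun w => ?_
  obtain ⟨c, rfl⟩ := (IsAlgClosed.algebraMap_bijective_of_isIntegral (k := F)).2 w
  exact ⟨c, (Algebra.algebraMap_eq_smul_one c).symm⟩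

theorem mem_annihilator_iff_forall_map_mul_eq_zero {μ : A →ₗ[F] F}
    (hnd : ∀ x : A, x ≠ 0 → ∃ y : A, μ (x * y) ≠ 0) {I : Ideal A} {x : A} :
    x ∈ I.annihilator ↔ ∀ a ∈ I, μ (x * a) = 0 := by
  refine ⟨fun hx a ha => by rw [← smul_eq_mul, Submodule.mem_annihilator.mp hx a ha, map_zero],
    fun h => Submodule.mem_annihilator.mpr fun a ha => ?_⟩
  by_contra hxa
  obtain ⟨y, hy⟩ := hnd _ hxa
  exact hy (by simpa [mul_assoc] using h _ (I.mul_mem_right y ha))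

theorem finrank_annihilator_add_finrank [FiniteDimensional F A] {μ : A →ₗ[F] F}
    (hnd : ∀ x : A, x ≠ 0 → ∃ y : A, μ (x * y) ≠ 0) (I : Ideal A) :
    finrank F (I.annihilator.restrictScalars F) + finrank F (I.restrictScalars F) =
      finrank F A := by
  let B : A →ₗ[F] Dual F A := (LinearMap.mul F A).compr₂ μ
  have hB : Function.Injective B := by
    refine LinearMap.ker_eq_bot.mp (LinearMap.ker_eq_bot'.mpr fun x hx => ?_)
    by_contra hx0
    obtain ⟨y, hy⟩ := hnd x hx0
    exact hy (LinearMap.congr_fun hx y)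
  let e : A ≃ₗ[F] Dual F A := .ofBijective B ⟨hB,
    (LinearMap.injective_iff_surjective_of_finrank_eq_finrank Subspace.dual_finrank_eq.symm).mp hB⟩
  have hann : I.annihilator.restrictScalars F =
      (I.restrictScalars F).dualAnnihilator.comap (e : A →ₗ[F] Dual F A) := by
    ext x
    simp only [Submodule.restrictScalars_mem, Submodule.mem_comap, Submodule.mem_dualAnnihilator,
      mem_annihilator_iff_forall_map_mul_eq_zero hnd]
    rfl
  rw [hann, Submodule.comap_equiv_eq_map_symm, LinearEquiv.finrank_map_eq, add_comm,
    Subspace.finrank_add_finrank_dualAnnihilator_eq]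

theorem finrank_annihilator_eq_one_of_isMaximal [IsAlgClosed F] [FiniteDimensional F A]
    {μ : A →ₗ[F] F} (hnd : ∀ x : A, x ≠ 0 → ∃ y : A, μ (x * y) ≠ 0) (m : Ideal A)
    [m.IsMaximal] : finrank F (m.annihilator.restrictScalars F) = 1 := by
  have hann := finrank_annihilator_add_finrank hnd m
  have hquot := Submodule.finrank_quotient_add_finrank (m.restrictScalars F)
  rw [(Submodule.Quotient.restrictScalarsEquiv F m).finrank_eq,
    finrank_quotient_eq_one_of_isAlgClosed] at hquot
  omega

end Ideal

/-- In a commutative Frobenius algebra with nonzero nilradical, the socle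
(annihilator of the nilpotent elements) is nonzero; and if moreover the algebra is
indecomposable, the socle is one-dimensional. -/
theorem stmt4 {F A : Type*} [Field F] [IsAlgClosed F] [CommRing A] [Algebra F A]
    [FiniteDimensional F A]
    (μ : A →ₗ[F] F) (hnd : ∀ x : A, x ≠ 0 → ∃ y : A, μ (x * y) ≠ 0)
    (hnil : ∃ n : A, n ≠ 0 ∧ IsNilpotent n) :
    (∃ s : A, s ≠ 0 ∧ ∀ a : A, IsNilpotent a → a * s = 0) ∧
    ((¬ ∃ A₁ A₂ : Ideal A, A₁ ≠ ⊥ ∧ A₂ ≠ ⊥ ∧ A₁ ⊔ A₂ = ⊤ ∧ A₁ ⊓ A₂ = ⊥ ∧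
        ∀ x ∈ A₁, ∀ y ∈ A₂, x * y = 0) →
      ∃ s : A, s ≠ 0 ∧ (∀ a : A, IsNilpotent a → a * s = 0) ∧
        ∀ t : A, (∀ a : A, IsNilpotent a → a * t = 0) → ∃ c : F, t = c • s) := by
  obtain ⟨n, hn, -⟩ := hnil
  have : Nontrivial A := nontrivial_of_ne n 0 hn
  have : IsArtinianRing A := isArtinian_of_tower F inferInstance
  have hsocle (s : A) :
      (∀ a : A, IsNilpotent a → a * s = 0) ↔ s ∈ (nilradical A).annihilator := by
    simp [Submodule.mem_annihilator, mem_nilradical, mul_comm]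
  refine ⟨?_, fun hind => ?_⟩
  · obtain ⟨s, hs0, hs⟩ := Ideal.exists_ne_zero_forall_mul_eq_zero_of_isNilpotent
      (IsArtinianRing.isNilpotent_nilradical (R := A))
    exact ⟨s, hs0, fun a ha => hs a (mem_nilradical.mpr ha)⟩
  have : IsLocalRing A := IsArtinianRing.isLocalRing_of_isIdempotentElem fun e he => by
    by_contra! h
    exact hind (Ideal.exists_ideal_decomposition_of_isIdempotentElem he h.1 h.2)
  rw [Ring.KrullDimLE.nilradical_eq_maximalIdeal] at hsocle
  obtain ⟨⟨s, hsS⟩, hs0, hs⟩ := finrank_eq_one_iff'.mp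
    (Ideal.finrank_annihilator_eq_one_of_isMaximal hnd (IsLocalRing.maximalIdeal A))
  refine ⟨s, by simpa using hs0, (hsocle s).mpr hsS, fun t ht => ?_⟩
  obtain ⟨c, hc⟩ := hs ⟨t, (hsocle t).mp ht⟩
  exact ⟨c, congrArg Subtype.val hc.symm⟩
end

section
/- Let A be a finite-dimensional commutative local Frobenius algebra over an algebraically closed field with functional μ, one-dimensional socle spanned by s with μ(s) = 1. Let N₁ ⊂ N₂ ⊂ ⋯ ⊂ N_n = A be the chain of ideals where N₁ is the socle and N_k is the preimage in A of the socle of A/N_{k-1}. If (a_i) is a basis of A adapted to this filtration (restricting to a basis of each N_k) and (b_i) is the dual basis with respect to the pairing μ(ab), then a_i b_i = s for every i. -/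
/-!
Since the nilradical of the finite-dimensional algebra `A` is nilpotent, every `a i` lies in some
`N m`. If `a i` first appears in `N (k + 1)`, then for every nilpotent `n` and every `y` the element
`n * y * a i` lies in `N k`, which is spanned by basis vectors `a j` with `j ≠ i`; by duality
`μ (n * (a i * b i) * y) = 0`. Nondegeneracy of the pairing puts `a i * b i` in the socle, so it is
a multiple of `s`, and `μ (a i * b i) = 1` forces the multiple to be `1`.
-/

def nilAnnihilator (A : Type*) [CommRing A] (k : ℕ) : Set A :=
  {x | ∀ f : Fin k → A, (∀ i, IsNilpotent (f i)) → (∏ i, f i) * x = 0}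

section nilAnnihilator

variable {A : Type*} [CommRing A]

theorem nilAnnihilator_zero : nilAnnihilator A 0 = {0} := by
  ext x
  simp [nilAnnihilator]

theorem mul_mem_nilAnnihilator {k : ℕ} {x n : A} (hx : x ∈ nilAnnihilator A (k + 1))
    (hn : IsNilpotent n) : n * x ∈ nilAnnihilator A k := by
  intro f hf
  have h := hx (Fin.cons n f) (Fin.cases hn hf)
  rw [Fin.prod_cons] at h
  rw [← h]
  ring

theorem exists_mem_nilAnnihilator [IsNoetherianRing A] (x : A) :
    ∃ k, x ∈ nilAnnihilator A k := by
  obtain ⟨k, hk⟩ := IsNoetherianRing.isNilpotent_nilradical A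
  refine ⟨k, fun f hf => ?_⟩
  have h : ∏ i, f i ∈ nilradical A ^ k := by
    simpa using Ideal.prod_mem_prod (s := Finset.univ) (I := fun _ => nilradical A)
      fun i _ => mem_nilradical.mpr (hf i)
  rw [hk, Ideal.zero_eq_bot, Ideal.mem_bot] at h
  rw [h, zero_mul]

theorem exists_notMem_nilAnnihilator_and_mem_succ [IsNoetherianRing A] {x : A} (hx : x ≠ 0) :
    ∃ k, x ∉ nilAnnihilator A k ∧ x ∈ nilAnnihilator A (k + 1) :=
  Nat.exists_not_and_succ_of_not_zero_of_exists (by simpa [nilAnnihilator_zero])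
    (exists_mem_nilAnnihilator x)

end nilAnnihilator

theorem apply_mul_dual_eq_zero_of_mem_span {F A ι : Type*} [Field F] [CommRing A] [Algebra F A]
    [DecidableEq ι] (μ : A →ₗ[F] F) (a b : ι → A)
    (hdual : ∀ i j, μ (a i * b j) = if i = j then 1 else 0) {i : ι} {S : Set A}
    (hS : ∀ j, a j ∈ S → j ≠ i) {x : A} (hx : x ∈ Submodule.span F {y | ∃ j, y = a j ∧ a j ∈ S}) :
    μ (x * b i) = 0 := by
  have h : Submodule.span F {y | ∃ j, y = a j ∧ a j ∈ S} ≤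
      LinearMap.ker (μ ∘ₗ LinearMap.mulRight F (b i)) := by
    rw [Submodule.span_le]
    rintro _ ⟨j, rfl, hj⟩
    simp [hdual, hS j hj]
  exact h hx

theorem stmt6_general {F A : Type*} [Field F] [CommRing A] [Algebra F A]
    [FiniteDimensional F A]
    (μ : A →ₗ[F] F) (hnd : ∀ x : A, x ≠ 0 → ∃ y : A, μ (x * y) ≠ 0)
    (s : A)
    (hsdim : ∀ t : A, (∀ a : A, IsNilpotent a → a * t = 0) → ∃ c : F, t = c • s)
    (hμs : μ s = 1)
    (N : ℕ → Submodule F A)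
    (hNdef : ∀ (k : ℕ) (x : A), x ∈ N k ↔
      ∀ f : Fin k → A, (∀ i, IsNilpotent (f i)) → (∏ i, f i) * x = 0)
    {ι : Type*} [DecidableEq ι] (a : Module.Basis ι F A) (b : ι → A)
    (hdual : ∀ i j, μ (a i * b j) = if i = j then 1 else 0)
    (hadapt : ∀ (k : ℕ) (x : A), x ∈ N k →
      x ∈ Submodule.span F {y : A | ∃ i, y = a i ∧ a i ∈ N k}) :
    ∀ i, a i * b i = s := by
  have : IsNoetherianRing A := isNoetherian_of_tower F inferInstance
  intro i
  obtain ⟨k, hk, hk1⟩ := exists_notMem_nilAnnihilator_and_mem_succ (a.ne_zero i)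
  have hsoc : ∀ n : A, IsNilpotent n → n * (a i * b i) = 0 := by
    intro n hn
    by_contra hne
    obtain ⟨y, hy⟩ := hnd _ hne
    have hmem : n * y * a i ∈ N k :=
      (hNdef _ _).2 (mul_mem_nilAnnihilator hk1 ((Commute.all n y).isNilpotent_mul_right hn))
    have hne_i : ∀ j, a j ∈ N k → j ≠ i := by
      rintro j hj rfl
      exact hk ((hNdef k (a j)).1 hj)
    refine hy (Eq.trans ?_ (apply_mul_dual_eq_zero_of_mem_span μ a b hdual hne_i
      (hadapt k _ hmem)))
    congr 1
    ring
  obtain ⟨c, hc⟩ := hsdim _ hsoc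
  have hc1 : c = 1 := by simpa [hc, hμs] using hdual i i
  rw [hc, hc1, one_smul]

/-- Local commutative Frobenius algebra with one-dimensional socle `F·s`, `μ s = 1`.
Let `N k` be the chain of ideals with `N 1` the socle and `N k` the preimage of the
socle of `A / N (k-1)` (equivalently, the annihilator of products of `k` nilpotents).
If the basis `(a i)` is adapted to this filtration (it restricts to a basis of each
`N k`) and `(b i)` is the dual basis for the pairing `μ (a * b)`, then
`a i * b i = s` for every `i`. -/
theorem stmt6 {F A : Type*} [Field F] [IsAlgClosed F] [CommRing A] [Algebra F A]
    [FiniteDimensional F A]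
    (μ : A →ₗ[F] F) (hnd : ∀ x : A, x ≠ 0 → ∃ y : A, μ (x * y) ≠ 0)
    (hloc : ∀ a : A, ∃ (c : F) (n : A), IsNilpotent n ∧ a = algebraMap F A c + n)
    (s : A) (hs : s ≠ 0) (hssoc : ∀ a : A, IsNilpotent a → a * s = 0)
    (hsdim : ∀ t : A, (∀ a : A, IsNilpotent a → a * t = 0) → ∃ c : F, t = c • s)
    (hμs : μ s = 1)
    (N : ℕ → Submodule F A)
    (hNdef : ∀ (k : ℕ) (x : A), x ∈ N k ↔
      ∀ f : Fin k → A, (∀ i, IsNilpotent (f i)) → (∏ i, f i) * x = 0)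
    {ι : Type*} [Fintype ι] [DecidableEq ι] (a : Module.Basis ι F A) (b : ι → A)
    (hdual : ∀ i j, μ (a i * b j) = if i = j then 1 else 0)
    (hadapt : ∀ (k : ℕ) (x : A), x ∈ N k →
      x ∈ Submodule.span F {y : A | ∃ i, y = a i ∧ a i ∈ N k}) :
    ∀ i, a i * b i = s :=
  stmt6_general μ hnd s hsdim hμs N hNdef a b hdual hadapt
end

section
/- Let A be a finite-dimensional commutative local Frobenius algebra (A, μ) over an algebraically closed field with one-dimensional socle spanned by s with μ(s) = 1. Let (a_i) be any basis of A and (b_i) its dual basis with respect to the pairing μ(ab). Then for all x ∈ A, Σ_i x a_i b_i = dim(A) · f(x) · s, where f : A → F is the unique algebra homomorphism to F (f(c·1 + nilpotent) = c). -/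
/-!
Since `(b i)` is the dual basis of `(a i)` under `μ(xy)`, `Σ_i μ(c a_i b_i)` is the trace of
multiplication by `c`; for `c = t + n` with `n` nilpotent this trace is `dim A · t = dim A · f(c)`.
Pairing the left side with any `y` thus gives `dim A · f(xy)`, and pairing the right side gives
`dim A · f(x) · μ(sy) = dim A · f(x) f(y)`, since `s` kills the nilpotent part of `y`.
Nondegeneracy of the pairing identifies the two sides.
-/

open Module

section DualBasis

variable {R A ι : Type*} [CommRing R] [Ring A] [Algebra R A] [Fintype ι] [DecidableEq ι]
  (μ : A →ₗ[R] R) (a : Basis ι R A) (b : ι → A)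

theorem Module.Basis.repr_apply_eq_of_dual
    (hdual : ∀ i j, μ (a i * b j) = if i = j then 1 else 0) (y : A) (i : ι) :
    a.repr y i = μ (y * b i) := by
  conv_rhs => rw [← a.sum_repr y, Finset.sum_mul, map_sum]
  simp [hdual]

theorem LinearMap.trace_eq_sum_of_dual
    (hdual : ∀ i j, μ (a i * b j) = if i = j then 1 else 0) (φ : A →ₗ[R] A) :
    LinearMap.trace R A φ = ∑ i, μ (φ (a i) * b i) := by
  simp only [LinearMap.trace_eq_matrix_trace R a, Matrix.trace, Matrix.diag_apply,
    LinearMap.toMatrix_apply, a.repr_apply_eq_of_dual μ b hdual]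

end DualBasis

theorem Algebra.trace_algebraMap_add_of_isNilpotent {F A : Type*} [Field F] [CommRing A]
    [Algebra F A] (c : F) {n : A} (hn : IsNilpotent n) :
    Algebra.trace F A (algebraMap F A c + n) = finrank F A * c := by
  rw [map_add, Algebra.trace_algebraMap, (Algebra.isNilpotent_trace_of_isNilpotent hn).eq_zero,
    add_zero, nsmul_eq_mul]

theorem AlgHom.apply_algebraMap_add_of_isNilpotent {F A : Type*} [Field F] [Ring A]
    [Algebra F A] (f : A →ₐ[F] F) (c : F) {n : A} (hn : IsNilpotent n) :
    f (algebraMap F A c + n) = c := by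
  rw [map_add, f.commutes, (hn.map f).eq_zero, add_zero, Algebra.algebraMap_self_apply]

theorem eq_of_forall_map_mul_eq {R A : Type*} [CommRing R] [Ring A] [Algebra R A]
    (μ : A →ₗ[R] R) (hnd : ∀ x : A, x ≠ 0 → ∃ y : A, μ (x * y) ≠ 0) {u v : A}
    (h : ∀ y, μ (u * y) = μ (v * y)) : u = v := by
  by_contra hne
  obtain ⟨y, hy⟩ := hnd (u - v) (sub_ne_zero.mpr hne)
  exact hy (by rw [sub_mul, map_sub, h, sub_self])

theorem stmt7_general {F A : Type*} [Field F] [CommRing A] [Algebra F A]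
    (μ : A →ₗ[F] F) (hnd : ∀ x : A, x ≠ 0 → ∃ y : A, μ (x * y) ≠ 0)
    (hloc : ∀ a : A, ∃ (c : F) (n : A), IsNilpotent n ∧ a = algebraMap F A c + n)
    (s : A) (hssoc : ∀ a : A, IsNilpotent a → a * s = 0)
    (hμs : μ s = 1)
    {ι : Type*} [Fintype ι] [DecidableEq ι] (a : Module.Basis ι F A) (b : ι → A)
    (hdual : ∀ i j, μ (a i * b j) = if i = j then 1 else 0)
    (f : A →ₐ[F] F) :
    ∀ x : A, ∑ i, x * (a i * b i) = ((Module.finrank F A : F) * f x) • s := by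
  have trace_eq : ∀ c : A, Algebra.trace F A c = finrank F A * f c := by
    intro c
    obtain ⟨t, n, hn, rfl⟩ := hloc c
    rw [Algebra.trace_algebraMap_add_of_isNilpotent t hn,
      f.apply_algebraMap_add_of_isNilpotent t hn]
  have socle_pairing : ∀ y : A, μ (s * y) = f y := by
    intro y
    obtain ⟨t, n, hn, rfl⟩ := hloc y
    rw [mul_add, mul_comm s n, hssoc n hn, add_zero, mul_comm, ← Algebra.smul_def, map_smul, hμs,
      f.apply_algebraMap_add_of_isNilpotent t hn, smul_eq_mul, mul_one]
  intro x
  refine eq_of_forall_map_mul_eq μ hnd fun y => ?_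
  calc μ ((∑ i, x * (a i * b i)) * y) = ∑ i, μ (x * y * a i * b i) := by
        simp only [Finset.sum_mul, map_sum]
        exact Finset.sum_congr rfl fun i _ => congrArg μ (by ring)
    _ = Algebra.trace F A (x * y) := by
        rw [Algebra.trace_apply, LinearMap.trace_eq_sum_of_dual μ a b hdual]
        rfl
    _ = μ (((finrank F A : F) * f x) • s * y) := by
        rw [trace_eq, smul_mul_assoc, map_smul, socle_pairing, map_mul, smul_eq_mul, mul_assoc]

/-- In a local commutative Frobenius algebra over an algebraically closed field
with one-dimensional socle `F·s`, `μ s = 1`: for any basis `(a i)` with dual basis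
`(b i)` (`μ (a i * b j) = δ_{ij}`), and `f : A → F` the unique algebra homomorphism,
`∑ i, x * a i * b i = dim A * f x • s` for all `x`. -/
theorem stmt7 {F A : Type*} [Field F] [IsAlgClosed F] [CommRing A] [Algebra F A]
    [FiniteDimensional F A]
    (μ : A →ₗ[F] F) (hnd : ∀ x : A, x ≠ 0 → ∃ y : A, μ (x * y) ≠ 0)
    (hloc : ∀ a : A, ∃ (c : F) (n : A), IsNilpotent n ∧ a = algebraMap F A c + n)
    (s : A) (hs : s ≠ 0) (hssoc : ∀ a : A, IsNilpotent a → a * s = 0)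
    (hsdim : ∀ t : A, (∀ a : A, IsNilpotent a → a * t = 0) → ∃ c : F, t = c • s)
    (hμs : μ s = 1)
    {ι : Type*} [Fintype ι] [DecidableEq ι] (a : Module.Basis ι F A) (b : ι → A)
    (hdual : ∀ i j, μ (a i * b j) = if i = j then 1 else 0)
    (f : A →ₐ[F] F) :
    ∀ x : A, ∑ i, x * (a i * b i) = ((Module.finrank F A : F) * f x) • s :=
  stmt7_general μ hnd hloc s hssoc hμs a b hdual f
end

section
/- Let (A, μ) be a finite-dimensional commutative local Frobenius algebra over an algebraically closed field with nonzero nilradical and one-dimensional socle. The genus-g closed-surface invariant Z(Σ_g) := μ(h^g) (h the handle element) satisfies: Z(sphere) = μ(1), Z(torus) = dim(A), and Z(Σ_g) = 0 for g ≥ 2. -/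
/-!
With respect to the dual bases, `μ (h * x)` is the trace of multiplication by `x`, so it vanishes
for nilpotent `x`; by nondegeneracy of `μ` every nilpotent element annihilates `h`. A nonzero
nilpotent `n` thus satisfies `n * h = 0`, so `h` is not a unit, and in a local algebra
`h = c + m` with `m` nilpotent this forces `c = 0`. Hence `h` is itself nilpotent, so `h * h = 0`.
-/

section HandleElement

variable {F A ι : Type*} [CommRing F] [CommRing A] [Algebra F A] [Fintype ι] [DecidableEq ι]
  {μ : A →ₗ[F] F} {b : ι → A}

theorem map_sum_mul_eq_card {a : ι → A}
    (hdual : ∀ i j, μ (a i * b j) = if i = j then 1 else 0) :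
    μ (∑ i, a i * b i) = Fintype.card ι := by
  simp [map_sum, hdual]

theorem map_sum_mul_mul_eq_trace {a : Module.Basis ι F A}
    (hdual : ∀ i j, μ (a i * b j) = if i = j then 1 else 0) (x : A) :
    μ ((∑ i, a i * b i) * x) = Algebra.trace F A x := by
  rw [Algebra.trace_eq_matrix_trace a, Matrix.trace, Finset.sum_mul, map_sum]
  refine Finset.sum_congr rfl fun i _ => ?_
  have hexpand : a i * b i * x = ∑ j, a.repr (x * a i) j • (a j * b i) := by
    conv_lhs => rw [mul_right_comm, mul_comm _ x, ← a.sum_repr (x * a i)]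
    simp only [Finset.sum_mul, smul_mul_assoc]
  simp [hexpand, hdual, Algebra.leftMulMatrix_eq_repr_mul]

theorem map_sum_mul_mul_eq_zero_of_isNilpotent {a : Module.Basis ι F A} [IsReduced F]
    (hdual : ∀ i j, μ (a i * b j) = if i = j then 1 else 0) {x : A} (hx : IsNilpotent x) :
    μ ((∑ i, a i * b i) * x) = 0 := by
  rw [map_sum_mul_mul_eq_trace hdual]
  exact (Algebra.isNilpotent_trace_of_isNilpotent hx).eq_zero

theorem IsNilpotent.mul_sum_mul_eq_zero {a : Module.Basis ι F A} [IsReduced F]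
    (hnd : ∀ x : A, x ≠ 0 → ∃ y : A, μ (x * y) ≠ 0)
    (hdual : ∀ i j, μ (a i * b j) = if i = j then 1 else 0) {x : A} (hx : IsNilpotent x) :
    x * ∑ i, a i * b i = 0 := by
  by_contra hne
  obtain ⟨y, hy⟩ := hnd _ hne
  apply hy
  rw [mul_comm x, mul_assoc]
  exact map_sum_mul_mul_eq_zero_of_isNilpotent hdual ((Commute.all x y).isNilpotent_mul_right hx)

end HandleElement

theorem isNilpotent_of_mul_eq_zero {F A : Type*} [Field F] [Ring A] [Algebra F A]
    (hloc : ∀ a : A, ∃ (c : F) (n : A), IsNilpotent n ∧ a = algebraMap F A c + n)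
    {n x : A} (hn : n ≠ 0) (hnx : n * x = 0) : IsNilpotent x := by
  obtain ⟨c, m, hm, rfl⟩ := hloc x
  by_cases hc : c = 0
  · simpa [hc] using hm
  have hunit : IsUnit (algebraMap F A c + m) :=
    hm.isUnit_add_left_of_commute ((Ne.isUnit hc).map _) (Algebra.commutes c m).symm
  exact absurd (hunit.mul_left_eq_zero.mp hnx) hn

theorem stmt17_general {F A : Type*} [Field F] [CommRing A] [Algebra F A]
    (μ : A →ₗ[F] F) (hnd : ∀ x : A, x ≠ 0 → ∃ y : A, μ (x * y) ≠ 0)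
    (hloc : ∀ a : A, ∃ (c : F) (n : A), IsNilpotent n ∧ a = algebraMap F A c + n)
    (hnil : ∃ n : A, n ≠ 0 ∧ IsNilpotent n)
    {ι : Type*} [Fintype ι] [DecidableEq ι] (a : Module.Basis ι F A) (b : ι → A)
    (hdual : ∀ i j, μ (a i * b j) = if i = j then 1 else 0) :
    μ ((∑ i, a i * b i) ^ 0) = μ 1 ∧
    μ ((∑ i, a i * b i) ^ 1) = (Module.finrank F A : F) ∧
    ∀ g : ℕ, 2 ≤ g → μ ((∑ i, a i * b i) ^ g) = 0 := by
  obtain ⟨n, hn0, hn⟩ := hnil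
  have hh : IsNilpotent (∑ i, a i * b i) :=
    isNilpotent_of_mul_eq_zero hloc hn0 (hn.mul_sum_mul_eq_zero hnd hdual)
  have hsq : (∑ i, a i * b i) ^ 2 = 0 := by
    rw [pow_two]
    exact hh.mul_sum_mul_eq_zero hnd hdual
  refine ⟨by rw [pow_zero], ?_, fun g hg => ?_⟩
  · rw [pow_one, map_sum_mul_eq_card hdual, Module.finrank_eq_card_basis a]
  · rw [← Nat.sub_add_cancel hg, pow_add, hsq, mul_zero, map_zero]

/-- In a local commutative Frobenius algebra over an algebraically closed field with
nonzero nilradical and one-dimensional socle `F·s`, `μ s = 1`: the closed-surface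
invariants `Z(Σ_g) = μ (h ^ g)` (with `h = ∑ i, a i * b i` the handle element)
satisfy `Z(sphere) = μ 1`, `Z(torus) = dim A`, and `Z(Σ_g) = 0` for `g ≥ 2`. -/
theorem stmt17 {F A : Type*} [Field F] [IsAlgClosed F] [CommRing A] [Algebra F A]
    [FiniteDimensional F A]
    (μ : A →ₗ[F] F) (hnd : ∀ x : A, x ≠ 0 → ∃ y : A, μ (x * y) ≠ 0)
    (hloc : ∀ a : A, ∃ (c : F) (n : A), IsNilpotent n ∧ a = algebraMap F A c + n)
    (hnil : ∃ n : A, n ≠ 0 ∧ IsNilpotent n)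
    (s : A) (hs : s ≠ 0) (hssoc : ∀ a : A, IsNilpotent a → a * s = 0)
    (hsdim : ∀ t : A, (∀ a : A, IsNilpotent a → a * t = 0) → ∃ c : F, t = c • s)
    (hμs : μ s = 1)
    {ι : Type*} [Fintype ι] [DecidableEq ι] (a : Module.Basis ι F A) (b : ι → A)
    (hdual : ∀ i j, μ (a i * b j) = if i = j then 1 else 0) :
    μ ((∑ i, a i * b i) ^ 0) = μ 1 ∧
    μ ((∑ i, a i * b i) ^ 1) = (Module.finrank F A : F) ∧
    ∀ g : ℕ, 2 ≤ g → μ ((∑ i, a i * b i) ^ g) = 0 :=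
  stmt17_general μ hnd hloc hnil a b hdual
end

section
/- There exist two non-isomorphic finite-dimensional commutative Frobenius algebras (A, μ) and (A', μ') over ℂ with μ(1) = μ'(1), dim A = dim A', and handle elements h, h' satisfying μ(h^g) = μ'(h'^g) for all g ≥ 0. (E.g., A = ℂ[x]/(x³) and A' = ℂ[x,y]/(x², y²) with suitable functionals both have all genus ≥ 2 invariants zero.) -/
/-- A finite-dimensional commutative Frobenius algebra over `ℂ`. -/
structure FrobAlg where
  carrier : Type
  [commRing : CommRing carrier]
  [alg : Algebra ℂ carrier]
  fin : FiniteDimensional ℂ carrier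
  μ : carrier →ₗ[ℂ] ℂ
  nondeg : ∀ x : carrier, x ≠ 0 → ∃ y : carrier, μ (x * y) ≠ 0

attribute [instance] FrobAlg.commRing FrobAlg.alg FrobAlg.fin

/-- `h` is the handle element of `B`: `h = ∑ i, a i * b i` for some basis `(a i)`
with dual basis `(b i)` for the pairing `μ (a * b)`. -/
def FrobAlg.IsHandle (B : FrobAlg) (h : B.carrier) : Prop :=
  ∃ (ι : Type) (_ : Fintype ι) (_ : DecidableEq ι) (a : Module.Basis ι ℂ B.carrier) (b : ι → B.carrier),
    (∀ i j, B.μ (a i * b j) = if i = j then 1 else 0) ∧ h = ∑ i, a i * b i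

/-!
For a handle element `h` one has `μ (x * h) = tr (x * ·)`. Hence `μ h = dim A`, and if `h` is
nilpotent then `μ (h ^ g) = tr (h ^ (g - 1) * ·) = 0` for `g ≥ 2`: the closed-surface invariants
are `μ 1, dim A, 0, 0, …`. In a local algebra (every element a unit or nilpotent) with a nonzero
nilpotent, `h` is not a unit, since otherwise `μ` would vanish on the nilpotents; so `h` is
nilpotent. Both `ℂ[x]/(x⁴)` (with `μ` the coefficient of `x³`) and `ℂ[x,y]/(x², y²)` (with `μ`
the coefficient of `xy`) are local of dimension 4 with `μ 1 = 0`, yet `x³ ≠ 0` in the first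
while every nilpotent of the second cubes to zero.
-/

namespace FrobAlg

variable {B : FrobAlg} {h : B.carrier}

theorem IsHandle.μ_mul_eq_trace (hh : B.IsHandle h) (x : B.carrier) :
    B.μ (x * h) = LinearMap.trace ℂ B.carrier (LinearMap.mulLeft ℂ x) := by
  obtain ⟨ι, _, _, a, b, hab, rfl⟩ := hh
  rw [Finset.mul_sum, map_sum, LinearMap.trace_eq_matrix_trace ℂ a, Matrix.trace]
  refine Finset.sum_congr rfl fun i _ => ?_
  rw [Matrix.diag_apply, LinearMap.toMatrix_apply, LinearMap.mulLeft_apply, ← mul_assoc,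
    ← a.sum_repr (x * a i), Finset.sum_mul, map_sum]
  simp [hab]

theorem IsHandle.μ_eq_finrank (hh : B.IsHandle h) : B.μ h = Module.finrank ℂ B.carrier := by
  simpa using hh.μ_mul_eq_trace 1

theorem IsHandle.μ_mul_eq_zero_of_isNilpotent (hh : B.IsHandle h) {x : B.carrier}
    (hx : IsNilpotent x) : B.μ (x * h) = 0 := by
  rw [hh.μ_mul_eq_trace]
  exact (LinearMap.isNilpotent_trace_of_isNilpotent
    ((LinearMap.isNilpotent_mulLeft_iff ℂ x).mpr hx)).eq_zero

theorem IsHandle.not_isUnit (hh : B.IsHandle h) {n : B.carrier} (hn : IsNilpotent n)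
    (hn0 : n ≠ 0) : ¬IsUnit h := by
  rintro ⟨u, rfl⟩
  obtain ⟨y, hy⟩ := B.nondeg n hn0
  refine hy ?_
  -- `μ (n y) = μ ((n y u⁻¹) u)` is the trace of a nilpotent operator.
  have hnil : IsNilpotent (n * y * ↑u⁻¹) :=
    (Commute.all _ _).isNilpotent_mul_right ((Commute.all _ _).isNilpotent_mul_right hn)
  simpa [mul_assoc] using hh.μ_mul_eq_zero_of_isNilpotent hnil

theorem IsHandle.isNilpotent (hh : B.IsHandle h)
    (hB : ∀ x : B.carrier, IsUnit x ∨ IsNilpotent x) {n : B.carrier} (hn : IsNilpotent n)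
    (hn0 : n ≠ 0) : IsNilpotent h :=
  (hB h).resolve_left (hh.not_isUnit hn hn0)

theorem IsHandle.μ_pow_add_two (hh : B.IsHandle h) (hnil : IsNilpotent h) (g : ℕ) :
    B.μ (h ^ (g + 2)) = 0 := by
  rw [pow_succ]
  exact hh.μ_mul_eq_zero_of_isNilpotent (hnil.pow_succ _)

theorem IsHandle.μ_pow_eq_of_isNilpotent {B B' : FrobAlg} {h : B.carrier} {h' : B'.carrier}
    (hμ : B.μ 1 = B'.μ 1) (hdim : Module.finrank ℂ B.carrier = Module.finrank ℂ B'.carrier)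
    (hh : B.IsHandle h) (hh' : B'.IsHandle h') (hnil : IsNilpotent h) (hnil' : IsNilpotent h') :
    ∀ g : ℕ, B.μ (h ^ g) = B'.μ (h' ^ g)
  | 0 => by simpa using hμ
  | 1 => by simpa [hh.μ_eq_finrank, hh'.μ_eq_finrank] using hdim
  | g + 2 => by rw [hh.μ_pow_add_two hnil, hh'.μ_pow_add_two hnil']

end FrobAlg

namespace TrivSqZeroExt

variable {R M : Type*} [CommRing R] [AddCommGroup M] [Module R M] [Module Rᵐᵒᵖ M]
  [IsCentralScalar R M]

theorem pow_succ_eq_zero_of_fst_pow_eq_zero {x : TrivSqZeroExt R M} {k : ℕ}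
    (hx : x.fst ^ k = 0) : x ^ (k + 1) = 0 := by
  ext
  · simp [fst_pow, pow_succ, hx]
  · simp [hx]

theorem pow_succ_eq_zero_of_isNilpotent {k : ℕ} (hR : ∀ r : R, IsNilpotent r → r ^ k = 0)
    {x : TrivSqZeroExt R M} (hx : IsNilpotent x) : x ^ (k + 1) = 0 :=
  pow_succ_eq_zero_of_fst_pow_eq_zero (hR _ (isNilpotent_iff_isNilpotent_fst.mp hx))

theorem isUnit_or_isNilpotent_of_forall (hR : ∀ r : R, IsUnit r ∨ IsNilpotent r)
    (x : TrivSqZeroExt R M) : IsUnit x ∨ IsNilpotent x := by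
  rw [isUnit_iff_isUnit_fst, isNilpotent_iff_isNilpotent_fst]
  exact hR x.fst

end TrivSqZeroExt

open Polynomial

theorem Polynomial.coeff_modByMonic_X_pow {R : Type*} [CommRing R] (p : R[X]) {n i : ℕ}
    (hi : i < n) : (p %ₘ X ^ n).coeff i = p.coeff i := by
  conv_rhs => rw [← modByMonic_add_div p (X ^ n)]
  simp [coeff_X_pow_mul', Nat.not_le.mpr hi]

namespace AdjoinRoot

variable {R : Type*} [CommRing R] (n : ℕ)

noncomputable def topCoeff : AdjoinRoot (X ^ n : R[X]) →ₗ[R] R :=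
  lcoeff R (n - 1) ∘ₗ (AdjoinRoot.isAdjoinRootMonic _ (monic_X_pow n)).modByMonicHom

variable {n}

theorem topCoeff_mk (p : R[X]) : topCoeff n (mk _ p) = (p %ₘ X ^ n).coeff (n - 1) := by
  simp only [topCoeff, LinearMap.comp_apply, lcoeff_apply]
  exact congrArg (coeff · (n - 1))
    ((AdjoinRoot.isAdjoinRootMonic _ (monic_X_pow n)).modByMonicHom_map p)

theorem topCoeff_one (hn : 2 ≤ n) : topCoeff n (1 : AdjoinRoot (X ^ n : R[X])) = 0 := by
  rw [← map_one (mk _), topCoeff_mk, coeff_modByMonic_X_pow _ (by omega), coeff_one]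
  simp only [ite_eq_right_iff]
  omega

theorem topCoeff_root_pow_pred (hn : 0 < n) :
    topCoeff n (root (X ^ n : R[X]) ^ (n - 1)) = 1 := by
  rw [← mk_X, ← map_pow, topCoeff_mk, coeff_modByMonic_X_pow _ (by omega), coeff_X_pow_self]

theorem root_X_pow_pow_pred_ne_zero [Nontrivial R] (hn : 0 < n) :
    root (X ^ n : R[X]) ^ (n - 1) ≠ 0 := fun h0 => by
  simpa [h0] using topCoeff_root_pow_pred (R := R) hn

theorem root_X_pow_pow_self : root (X ^ n : R[X]) ^ n = 0 := by
  rw [← mk_X, ← map_pow, mk_self]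

theorem isNilpotent_root_X_pow : IsNilpotent (root (X ^ n : R[X])) :=
  ⟨n, root_X_pow_pow_self⟩

theorem exists_topCoeff_mul_ne_zero {x : AdjoinRoot (X ^ n : R[X])} (hx : x ≠ 0) :
    ∃ y, topCoeff n (x * y) ≠ 0 := by
  obtain ⟨p, rfl⟩ := mk_surjective x
  obtain ⟨k, hk, hpk⟩ : ∃ k < n, p.coeff k ≠ 0 := by
    simpa [mk_eq_zero, X_pow_dvd_iff] using hx
  refine ⟨root _ ^ (n - 1 - k), ?_⟩
  rw [← mk_X, ← map_pow, ← map_mul, topCoeff_mk, coeff_modByMonic_X_pow _ (by omega),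
    coeff_mul_X_pow', if_pos (by omega), show n - 1 - (n - 1 - k) = k by omega]
  exact hpk

theorem isUnit_or_isNilpotent_of_X_pow {K : Type*} [Field K] (x : AdjoinRoot (X ^ n : K[X])) :
    IsUnit x ∨ IsNilpotent x := by
  obtain ⟨p, rfl⟩ := mk_surjective x
  obtain ⟨q, hq⟩ := X_dvd_sub_C (p := p)
  have hp : mk (X ^ n) p = of (X ^ n) (p.coeff 0) + root (X ^ n) * mk (X ^ n) q := by
    rw [← mk_C, ← mk_X, ← map_mul, ← map_add, ← hq, add_sub_cancel]
  have hnil : IsNilpotent (root (X ^ n : K[X]) * mk _ q) :=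
    (Commute.all _ _).isNilpotent_mul_right isNilpotent_root_X_pow
  rcases eq_or_ne (p.coeff 0) 0 with h0 | h0
  · exact .inr (by simpa [hp, h0] using hnil)
  · exact .inl (hp ▸ hnil.isUnit_add_left_of_commute ((isUnit_iff_ne_zero.mpr h0).map _)
      (Commute.all _ _))

theorem finrank_X_pow {K : Type*} [Field K] :
    Module.finrank K (AdjoinRoot (X ^ n : K[X])) = n := by
  rw [(AdjoinRoot.isAdjoinRootMonic _ (monic_X_pow n)).finrank, natDegree_X_pow]

end AdjoinRoot

namespace FrobAlg

abbrev complex : FrobAlg where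
  carrier := ℂ
  fin := inferInstance
  μ := LinearMap.id
  nondeg x hx := ⟨1, by simpa using hx⟩

open TrivSqZeroExt in
theorem exists_μ_snd_mul_ne_zero (B : FrobAlg) {x : TrivSqZeroExt B.carrier B.carrier}
    (hx : x ≠ 0) : ∃ y, B.μ (x * y).snd ≠ 0 := by
  by_cases hm : x.snd = 0
  · have ha : x.fst ≠ 0 := fun ha => hx (ext ha hm)
    obtain ⟨y, hy⟩ := B.nondeg _ ha
    exact ⟨inr y, by simpa [hm, mul_comm] using hy⟩
  · obtain ⟨y, hy⟩ := B.nondeg _ hm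
    exact ⟨inl y, by simpa [mul_comm] using hy⟩

/-- The trivial extension `B ⋉ B`; `trivExt (trivExt complex)` is `ℂ[x,y]/(x², y²)`
via `x ↦ inl ε`, `y ↦ inr 1`. -/
abbrev trivExt (B : FrobAlg) : FrobAlg where
  carrier := TrivSqZeroExt B.carrier B.carrier
  fin := inferInstanceAs (FiniteDimensional ℂ (B.carrier × B.carrier))
  μ := B.μ ∘ₗ
    (LinearMap.snd ℂ B.carrier B.carrier : TrivSqZeroExt B.carrier B.carrier →ₗ[ℂ] B.carrier)
  nondeg _ := B.exists_μ_snd_mul_ne_zero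

theorem trivExt_μ_one (B : FrobAlg) : (trivExt B).μ 1 = 0 := B.μ.map_zero

theorem finrank_trivExt (B : FrobAlg) :
    Module.finrank ℂ (trivExt B).carrier = 2 * Module.finrank ℂ B.carrier :=
  (Module.finrank_prod (R := ℂ) (M := B.carrier) (M' := B.carrier)).trans (two_mul _).symm

theorem trivExt_exists_isNilpotent_ne_zero (B : FrobAlg) [Nontrivial B.carrier] :
    ∃ n : (trivExt B).carrier, IsNilpotent n ∧ n ≠ 0 :=
  ⟨TrivSqZeroExt.inr 1, TrivSqZeroExt.isNilpotent_inr 1,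
    fun h => one_ne_zero (congrArg TrivSqZeroExt.snd h)⟩

noncomputable abbrev truncPoly (n : ℕ) : FrobAlg where
  carrier := AdjoinRoot (X ^ n : ℂ[X])
  fin := (AdjoinRoot.isAdjoinRootMonic _ (monic_X_pow n)).finite
  μ := AdjoinRoot.topCoeff n
  nondeg _ := AdjoinRoot.exists_topCoeff_mul_ne_zero

end FrobAlg

open FrobAlg

/-- There exist two non-isomorphic finite-dimensional commutative Frobenius algebras
over `ℂ` with the same `μ(1)`, the same dimension, and the same closed-surface
invariants `μ (h ^ g)` for all genera `g ≥ 0` (where `h` is the handle element). -/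
theorem stmt18 :
    ∃ B B' : FrobAlg,
      B.μ 1 = B'.μ 1 ∧
      Module.finrank ℂ B.carrier = Module.finrank ℂ B'.carrier ∧
      (∀ (h : B.carrier) (h' : B'.carrier), B.IsHandle h → B'.IsHandle h' →
        ∀ g : ℕ, B.μ (h ^ g) = B'.μ (h' ^ g)) ∧
      ¬ ∃ φ : B.carrier ≃ₐ[ℂ] B'.carrier, ∀ x : B.carrier, B'.μ (φ x) = B.μ x := by
  have hμ : (truncPoly 4).μ 1 = (trivExt (trivExt complex)).μ 1 :=
    (AdjoinRoot.topCoeff_one (by norm_num)).trans (trivExt_μ_one _).symm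
  have hdim : Module.finrank ℂ (truncPoly 4).carrier =
      Module.finrank ℂ (trivExt (trivExt complex)).carrier := by
    rw [finrank_trivExt, finrank_trivExt, AdjoinRoot.finrank_X_pow]
    simp
  have hroot : IsNilpotent (AdjoinRoot.root (X ^ 4 : ℂ[X])) := AdjoinRoot.isNilpotent_root_X_pow
  have hroot3 : AdjoinRoot.root (X ^ 4 : ℂ[X]) ^ 3 ≠ 0 :=
    AdjoinRoot.root_X_pow_pow_pred_ne_zero (n := 4) (by norm_num)
  refine ⟨truncPoly 4, trivExt (trivExt complex), hμ, hdim, fun h h' hh hh' => ?_, ?_⟩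
  · obtain ⟨n', hn', hn'0⟩ := trivExt_exists_isNilpotent_ne_zero (trivExt complex)
    refine IsHandle.μ_pow_eq_of_isNilpotent hμ hdim hh hh' ?_ ?_
    · exact hh.isNilpotent AdjoinRoot.isUnit_or_isNilpotent_of_X_pow (hroot.pow_succ 2) hroot3
    · exact hh'.isNilpotent (TrivSqZeroExt.isUnit_or_isNilpotent_of_forall
        TrivSqZeroExt.isUnit_or_isNilpotent) hn' hn'0
  · rintro ⟨φ, -⟩
    have hcube : ∀ y : (trivExt (trivExt complex)).carrier, IsNilpotent y → y ^ 3 = 0 :=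
      fun _ => TrivSqZeroExt.pow_succ_eq_zero_of_isNilpotent fun _ =>
        TrivSqZeroExt.pow_succ_eq_zero_of_isNilpotent fun c hc => by simpa using hc.eq_zero
    refine hroot3 (φ.injective ?_)
    rw [map_pow, hcube _ (hroot.map φ), map_zero]
end
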